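/- arXiv:1612.09552 — 3 statements merged into one kernel-verified Lean document; each statement's English description precedes it below -/
import Mathlib

section
/- Let H be a separable Hilbert space and let P : ℝ^d → B(H) be a continuous (in operator norm) family of orthogonal projectors that is periodic with respect to a lattice Λ ≅ ℤ^d, and such that each P(k) has finite rank. Then the set K = { φ ∈ H : ‖φ‖ = 1 and P(k)φ = φ for some k ∈ ℝ^d } is compact in H. -/
/-!
By periodicity the quasi-momentum `k` may be taken in the compact cube `[0,1]^d`. Given unit
vectors `φₙ` fixed by `P kₙ`, pass to a subsequence with `kₙ → k₀`; then
`φₙ - P k₀ φₙ = (P kₙ - P k₀) φₙ → 0`, while `P k₀ φₙ` has a convergent subsequence because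
`P k₀` has finite rank, hence is a compact operator. The limit is a unit vector fixed by `P k₀`.
-/

open Filter Topology

theorem ContinuousLinearMap.isCompactOperator_of_finiteDimensional_range {𝕜 E F : Type*}
    [NontriviallyNormedField 𝕜] [LocallyCompactSpace 𝕜] [NormedAddCommGroup E] [NormedSpace 𝕜 E]
    [NormedAddCommGroup F] [NormedSpace 𝕜 F] (T : E →L[𝕜] F)
    [FiniteDimensional 𝕜 (LinearMap.range (T : E →ₗ[𝕜] F))] : IsCompactOperator T :=
  have := FiniteDimensional.proper 𝕜 (LinearMap.range (T : E →ₗ[𝕜] F))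
  (isCompactOperator_of_locallyCompactSpace_dom
    (T.codRestrict _ (LinearMap.mem_range_self (T : E →ₗ[𝕜] F)))).continuous_comp
    continuous_subtype_val

theorem ContinuousLinearMap.norm_sub_apply_le_of_apply_eq_self {𝕜 E : Type*}
    [NontriviallyNormedField 𝕜] [NormedAddCommGroup E] [NormedSpace 𝕜 E] {P Q : E →L[𝕜] E} {φ : E}
    (hφ : P φ = φ) : ‖φ - Q φ‖ ≤ ‖P - Q‖ * ‖φ‖ := by
  simpa only [sub_apply, hφ] using (P - Q).le_opNorm φ

theorem exists_mem_Icc_eq_of_periodic {d : ℕ} {α : Type*} {f : (Fin d → ℝ) → α}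
    (hf : ∀ (k : Fin d → ℝ) (γ : Fin d → ℤ), f (k + fun i => (γ i : ℝ)) = f k) (k : Fin d → ℝ) :
    ∃ k' ∈ Set.Icc (0 : Fin d → ℝ) 1, f k' = f k := by
  refine ⟨fun i => Int.fract (k i),
    ⟨fun i => Int.fract_nonneg _, fun i => (Int.fract_lt_one _).le⟩, ?_⟩
  rw [← hf _ fun i => ⌊k i⌋]
  congr 1
  ext i
  exact Int.fract_add_floor (k i)

theorem IsCompact.setOf_norm_eq_one_exists_apply_eq_self {𝕜 E X : Type*}
    [NontriviallyNormedField 𝕜] [NormedAddCommGroup E] [NormedSpace 𝕜 E]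
    [TopologicalSpace X] [FirstCountableTopology X] {S : Set X} (hS : IsCompact S)
    {P : X → E →L[𝕜] E} (hP : ContinuousOn P S) (hcomp : ∀ k ∈ S, IsCompactOperator (P k)) :
    IsCompact {φ : E | ‖φ‖ = 1 ∧ ∃ k ∈ S, P k φ = φ} := by
  refine isCompact_iff_isSeqCompact.2 fun x hx => ?_
  choose hx1 k hkS hk using hx
  obtain ⟨k₀, hk₀S, σ, hσ, hkσ⟩ := hS.tendsto_subseq hkS
  have hPσ : Tendsto (fun n => P (k (σ n))) atTop (𝓝 (P k₀)) :=
    (hP k₀ hk₀S).tendsto.comp (tendsto_nhdsWithin_iff.2 ⟨hkσ, .of_forall fun n => hkS _⟩)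
  have hdiff : Tendsto (fun n => x (σ n) - P k₀ (x (σ n))) atTop (𝓝 0) := by
    refine squeeze_zero_norm (fun n => ?_) (tendsto_iff_norm_sub_tendsto_zero.1 hPσ)
    simpa [hx1] using ContinuousLinearMap.norm_sub_apply_le_of_apply_eq_self (Q := P k₀) (hk (σ n))
  obtain ⟨ψ, -, τ, hτ, hψ⟩ := ((hcomp k₀ hk₀S).isCompact_closure_image_closedBall 1).tendsto_subseq
    (x := fun n => P k₀ (x (σ n))) fun n =>
      subset_closure ⟨_, mem_closedBall_zero_iff.2 (hx1 _).le, rfl⟩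
  have hxψ : Tendsto (fun n => x (σ (τ n))) atTop (𝓝 ψ) := by
    simpa using hψ.add (hdiff.comp hτ.tendsto_atTop)
  refine ⟨ψ, ⟨?_, k₀, hk₀S, ?_⟩, σ ∘ τ, hσ.comp hτ, hxψ⟩
  · exact tendsto_nhds_unique hxψ.norm (by simp [hx1])
  · exact tendsto_nhds_unique (((P k₀).continuous.tendsto ψ).comp hxψ) hψ

theorem stmt_0_general {d : ℕ} {H : Type*} [NormedAddCommGroup H] [InnerProductSpace ℂ H]
    (P : (Fin d → ℝ) → H →L[ℂ] H)
    (hcont : Continuous P)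
    (hfin : ∀ k, FiniteDimensional ℂ (LinearMap.range (P k : H →ₗ[ℂ] H)))
    (hper : ∀ (k : Fin d → ℝ) (γ : Fin d → ℤ), P (k + fun i => (γ i : ℝ)) = P k) :
    IsCompact {φ : H | ‖φ‖ = 1 ∧ ∃ k, P k φ = φ} := by
  have hreduce : {φ : H | ‖φ‖ = 1 ∧ ∃ k, P k φ = φ} =
      {φ | ‖φ‖ = 1 ∧ ∃ k ∈ Set.Icc (0 : Fin d → ℝ) 1, P k φ = φ} := by
    ext φ
    refine and_congr_right fun _ => ⟨fun ⟨k, hk⟩ => ?_, fun ⟨k, _, hk⟩ => ⟨k, hk⟩⟩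
    obtain ⟨k', hk', hPk'⟩ := exists_mem_Icc_eq_of_periodic hper k
    exact ⟨k', hk', hPk' ▸ hk⟩
  rw [hreduce]
  refine isCompact_Icc.setOf_norm_eq_one_exists_apply_eq_self hcont.continuousOn fun k _ => ?_
  have := hfin k
  exact (P k).isCompactOperator_of_finiteDimensional_range

theorem stmt_0 {d : ℕ} {H : Type*} [NormedAddCommGroup H] [InnerProductSpace ℂ H]
    [CompleteSpace H] [TopologicalSpace.SeparableSpace H]
    (P : (Fin d → ℝ) → H →L[ℂ] H)
    (hcont : Continuous P)
    (hidem : ∀ k, IsIdempotentElem (P k))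
    (hsa : ∀ k, IsSelfAdjoint (P k))
    (hfin : ∀ k, FiniteDimensional ℂ (LinearMap.range (P k : H →ₗ[ℂ] H)))
    (hper : ∀ (k : Fin d → ℝ) (γ : Fin d → ℤ), P (k + fun i => (γ i : ℝ)) = P k) :
    IsCompact {φ : H | ‖φ‖ = 1 ∧ ∃ k, P k φ = φ} :=
  stmt_0_general P hcont hfin hper
end

section
/- Let H be a Hilbert space and P, Q two orthogonal projections on H with ‖P − Q‖ < 1 in operator norm. Then the Kato–Nagy operator W = (Id − (P − Q)²)^{-1/2} (P Q + (Id − P)(Id − Q)) is a well-defined unitary operator satisfying P = W Q W⁻¹. -/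
/-!
Write `U = P Q + (1 - P)(1 - Q)` and `T = 1 - (P - Q)²`. Idempotency of `P` and `Q` gives
`U* U = U U* = T` and `U Q = P U`. Thus `U` is normal with `|U|² = T`, `T` is invertible because
`‖(P - Q)²‖ < 1`, and `W = T^{-1/2} U` is the unitary factor in the polar decomposition of `U`.
It still intertwines `Q` with `P`, because `P T = U Q U* = T P`, so `P` commutes with `T^{-1/2}`.
-/

lemma spectrum_one_sub_subset_Ioi_of_norm_lt_one {A : Type*} [NormedRing A] [NormedAlgebra ℝ A]
    [CompleteSpace A] [NormOneClass A] {c : A} (hc : ‖c‖ < 1) :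
    spectrum ℝ (1 - c) ⊆ Set.Ioi 0 := by
  intro x hx
  rw [← map_one (algebraMap ℝ A), ← spectrum.singleton_sub_eq] at hx
  obtain ⟨_, rfl, y, hy, rfl⟩ := hx
  have : |y| < 1 := (spectrum.norm_le_norm_of_mem hy).trans_lt hc
  simp only [Set.mem_Ioi, sub_pos]
  exact (le_abs_self y).trans_lt this

section KatoNagy

variable {A : Type*} [Ring A]

def katoNagy (P Q : A) : A := P * Q + (1 - P) * (1 - Q)

variable {P Q : A}

lemma katoNagy_mul_katoNagy (hP : IsIdempotentElem P) (hQ : IsIdempotentElem Q) :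
    katoNagy Q P * katoNagy P Q = 1 - (P - Q) ^ 2 := by
  have hP' : ∀ X : A, P * (P * X) = P * X := fun X => by rw [← mul_assoc, hP.eq]
  unfold katoNagy
  noncomm_ring
  simp only [hP.eq, hQ.eq, hP']
  abel

lemma katoNagy_mul_right (hP : IsIdempotentElem P) (hQ : IsIdempotentElem Q) :
    katoNagy P Q * Q = P * katoNagy P Q := by
  rw [katoNagy, add_mul, mul_add, mul_assoc, hQ.eq, mul_assoc (1 - P), hQ.one_sub_mul_self,
    mul_zero, ← mul_assoc P P, hP.eq, ← mul_assoc P (1 - P), hP.mul_one_sub_self, zero_mul]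

lemma star_katoNagy [StarRing A] (hP : IsSelfAdjoint P) (hQ : IsSelfAdjoint Q) :
    star (katoNagy P Q) = katoNagy Q P := by
  simp [katoNagy, star_sub, hP.star_eq, hQ.star_eq]

end KatoNagy

section InvSqrt

variable {A : Type*} [Ring A] [StarRing A] [Algebra ℝ A] [TopologicalSpace A]
  [ContinuousFunctionalCalculus ℝ A IsSelfAdjoint]

lemma cfc_inv_sqrt_mul_mul_cfc_inv_sqrt {a : A} (ha : IsSelfAdjoint a)
    (hspec : spectrum ℝ a ⊆ Set.Ioi 0) :
    cfc (fun x : ℝ => (√x)⁻¹) a * a * cfc (fun x : ℝ => (√x)⁻¹) a = 1 := by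
  have hcont : ContinuousOn (fun x : ℝ => (√x)⁻¹) (spectrum ℝ a) :=
    Real.continuous_sqrt.continuousOn.inv₀ fun x hx => (Real.sqrt_pos.2 (hspec hx)).ne'
  nth_rewrite 2 [← cfc_id' ℝ a]
  rw [← cfc_mul .., ← cfc_mul .., ← cfc_const_one ℝ a]
  refine cfc_congr fun x hx => ?_
  have hx : 0 < x := hspec hx
  rw [mul_right_comm, ← mul_inv, Real.mul_self_sqrt hx.le, inv_mul_cancel₀ hx.ne']

variable [IsTopologicalRing A] [T2Space A] {a U : A}

lemma commute_cfc_of_star_mul_eq_of_mul_star_eq (f : ℝ → ℝ) (hU₁ : star U * U = a)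
    (hU₂ : U * star U = a) : Commute (cfc f a) U :=
  have hUa : Commute U a := calc
    U * a = U * star U * U := by rw [← hU₁, mul_assoc]
    _ = a * U := by rw [hU₂]
  hUa.symm.cfc_real _

lemma cfc_inv_sqrt_mul_mem_unitary (ha : IsSelfAdjoint a) (hspec : spectrum ℝ a ⊆ Set.Ioi 0)
    (hU₁ : star U * U = a) (hU₂ : U * star U = a) :
    cfc (fun x : ℝ => (√x)⁻¹) a * U ∈ unitary A := by
  set R := cfc (fun x : ℝ => (√x)⁻¹) a
  have hRa : R * a * R = 1 := cfc_inv_sqrt_mul_mul_cfc_inv_sqrt ha hspec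
  have hRU : Commute R U := commute_cfc_of_star_mul_eq_of_mul_star_eq _ hU₁ hU₂
  rw [Unitary.mem_iff, star_mul, (cfc_predicate _ a : IsSelfAdjoint R).star_eq]
  constructor
  · calc star U * R * (R * U) = star U * (R * R * U) := by noncomm_ring
      _ = R * a * R := by
        rw [(hRU.mul_left hRU).eq, ← mul_assoc, hU₁, ← mul_assoc,
          ((Commute.refl a).cfc_real _).eq]
      _ = 1 := hRa
  · calc R * U * (star U * R) = R * a * R := by rw [← hU₂]; noncomm_ring
      _ = 1 := hRa

lemma cfc_inv_sqrt_mul_conj_eq {P Q : A} (hP : IsSelfAdjoint P) (hQ : IsSelfAdjoint Q)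
    (ha : IsSelfAdjoint a) (hspec : spectrum ℝ a ⊆ Set.Ioi 0)
    (hU₂ : U * star U = a) (hUQ : U * Q = P * U) :
    cfc (fun x : ℝ => (√x)⁻¹) a * U * Q * star (cfc (fun x : ℝ => (√x)⁻¹) a * U) = P := by
  set R := cfc (fun x : ℝ => (√x)⁻¹) a
  have hQU : Q * star U = star U * P := by
    simpa only [star_mul, hP.star_eq, hQ.star_eq] using congrArg star hUQ
  have hPa : Commute P a := calc
    P * a = U * Q * star U := by rw [← hU₂, ← mul_assoc, hUQ]
    _ = a * P := by rw [mul_assoc, hQU, ← mul_assoc, hU₂]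
  rw [star_mul, (cfc_predicate _ a : IsSelfAdjoint R).star_eq]
  calc R * U * Q * (star U * R) = R * (P * a) * R := by
        rw [← hU₂, ← mul_assoc P, ← hUQ]; noncomm_ring
    _ = P * (R * a * R) := by rw [← mul_assoc, (hPa.symm.cfc_real _).eq]; noncomm_ring
    _ = P := by rw [cfc_inv_sqrt_mul_mul_cfc_inv_sqrt ha hspec, mul_one]

end InvSqrt

theorem stmt_3 {H : Type*} [NormedAddCommGroup H] [InnerProductSpace ℂ H] [CompleteSpace H]
    (P Q : H →L[ℂ] H)
    (hPi : IsIdempotentElem P) (hPsa : IsSelfAdjoint P)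
    (hQi : IsIdempotentElem Q) (hQsa : IsSelfAdjoint Q)
    (hnorm : ‖P - Q‖ < 1) :
    (cfc (fun x : ℝ => (Real.sqrt x)⁻¹) (1 - (P - Q) ^ 2) * (P * Q + (1 - P) * (1 - Q))) ∈
        unitary (H →L[ℂ] H) ∧
      P = (cfc (fun x : ℝ => (Real.sqrt x)⁻¹) (1 - (P - Q) ^ 2) * (P * Q + (1 - P) * (1 - Q))) *
            Q *
          star (cfc (fun x : ℝ => (Real.sqrt x)⁻¹) (1 - (P - Q) ^ 2) *
            (P * Q + (1 - P) * (1 - Q))) := by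
  -- `NormOneClass (H →L[ℂ] H)`, needed for the spectral bound, holds only for nontrivial `H`.
  rcases subsingleton_or_nontrivial H with hH | hH
  · have : Subsingleton (H →L[ℂ] H) :=
      ⟨fun _ _ => ContinuousLinearMap.ext fun _ => Subsingleton.elim _ _⟩
    exact ⟨by simp [Subsingleton.elim _ (1 : H →L[ℂ] H)], Subsingleton.elim _ _⟩
  have ha : IsSelfAdjoint (1 - (P - Q) ^ 2) := .sub (.one _) ((hPsa.sub hQsa).pow 2)
  have hspec : spectrum ℝ (1 - (P - Q) ^ 2) ⊆ Set.Ioi 0 :=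
    spectrum_one_sub_subset_Ioi_of_norm_lt_one <| calc
      ‖(P - Q) ^ 2‖ ≤ ‖P - Q‖ ^ 2 := norm_pow_le _ 2
      _ < 1 := pow_lt_one₀ (norm_nonneg _) hnorm two_ne_zero
  have hU₁ : star (katoNagy P Q) * katoNagy P Q = 1 - (P - Q) ^ 2 := by
    rw [star_katoNagy hPsa hQsa, katoNagy_mul_katoNagy hPi hQi]
  have hU₂ : katoNagy P Q * star (katoNagy P Q) = 1 - (P - Q) ^ 2 := by
    rw [star_katoNagy hPsa hQsa, katoNagy_mul_katoNagy hQi hPi, ← neg_sub P Q, neg_sq]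
  exact ⟨cfc_inv_sqrt_mul_mem_unitary ha hspec hU₁ hU₂,
    (cfc_inv_sqrt_mul_conj_eq hPsa hQsa ha hspec hU₂ (katoNagy_mul_right hPi hQi)).symm⟩
end

section
/- Let Ψ : B̄(0,R) ⊂ ℝ² → ℝ^ν be in H¹ and let Ψ_ℓ := Ψ * ρ_ℓ be mollifications with ρ_ℓ(x) = ℓ² ρ(ℓx) for a smooth nonnegative mollifier ρ supported in the unit ball with unit mass. If Ψ takes values a.e. in a compact set M ⊂ ℝ^ν, then for every point k̄, dist(Ψ_ℓ(k̄), M)² ≤ C_ρ ∫_{B(k̄, 1/ℓ)} ‖∇Ψ(k)‖² dk, where the constant C_ρ depends only on ρ. In particular the distance tends to 0 uniformly in k̄ as ℓ → ∞. -/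
open MeasureTheory Filter Metric Set Topology
open scoped ENNReal NNReal

noncomputable abbrev E2aux := EuclideanSpace ℝ (Fin 2)

lemma ennreal_le_one_add_sq (a : ℝ≥0∞) : a ≤ 1 + a ^ 2 := by
  rcases le_total a 1 with h | h
  · exact le_trans h le_self_add
  · calc a = a * 1 := (mul_one a).symm
      _ ≤ a * a := by exact mul_le_mul_right h a
      _ ≤ 1 + a ^ 2 := by rw [← sq]; exact le_add_self

lemma aux_CS {α : Type*} [MeasurableSpace α] {μ : Measure α} {w g : α → ℝ≥0∞}
    (hw : AEMeasurable w μ) (hg : AEMeasurable g μ) :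
    (∫⁻ a, w a * g a ∂μ) ^ 2 ≤ (∫⁻ a, w a ∂μ) * ∫⁻ a, w a * g a ^ 2 ∂μ := by
  have hpq : Real.HolderConjugate 2 2 := Real.HolderConjugate.two_two
  have h := ENNReal.lintegral_mul_le_Lp_mul_Lq μ hpq
    (f := fun a => w a ^ (1/2 : ℝ)) (g := fun a => w a ^ (1/2 : ℝ) * g a)
    (hw.pow_const _) ((hw.pow_const _).mul hg)
  have h1 : ∀ a, (fun a => w a ^ (1/2:ℝ)) a * (fun a => w a ^ (1/2:ℝ) * g a) a = w a * g a := by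
    intro a
    show w a ^ (1/2:ℝ) * (w a ^ (1/2:ℝ) * g a) = _
    rw [← mul_assoc, ← ENNReal.rpow_add_of_nonneg _ _ (by norm_num) (by norm_num)]
    norm_num
  have h2 : ∀ a, ((fun a => w a ^ (1/2:ℝ)) a) ^ (2:ℝ) = w a := by
    intro a
    show (w a ^ (1/2:ℝ)) ^ (2:ℝ) = w a
    rw [← ENNReal.rpow_mul]
    norm_num
  have h3 : ∀ a, ((fun a => w a ^ (1/2:ℝ) * g a) a) ^ (2:ℝ) = w a * g a ^ 2 := by
    intro a
    show (w a ^ (1/2:ℝ) * g a) ^ (2:ℝ) = w a * g a ^ 2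
    rw [ENNReal.mul_rpow_of_nonneg _ _ (by norm_num), ← ENNReal.rpow_mul,
      ← ENNReal.rpow_natCast (g a) 2]
    norm_num
  simp only [Pi.mul_apply] at h
  simp only [h1, h2, h3] at h
  calc (∫⁻ a, w a * g a ∂μ) ^ 2
      ≤ ((∫⁻ a, w a ∂μ) ^ (1/2:ℝ) * (∫⁻ a, w a * g a ^ 2 ∂μ) ^ (1/2:ℝ)) ^ 2 := by
        exact pow_le_pow_left' h 2
    _ = (∫⁻ a, w a ∂μ) * ∫⁻ a, w a * g a ^ 2 ∂μ := by
        rw [mul_pow, ← ENNReal.rpow_natCast (_ ^ (1/2:ℝ)) 2, ← ENNReal.rpow_natCast (_ ^ (1/2:ℝ)) 2,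
          ← ENNReal.rpow_mul, ← ENNReal.rpow_mul]
        norm_num

lemma aux_affine (G : E2aux → ℝ≥0∞) (hG : Measurable G) {c : ℝ} (hc : c ≠ 0) (b : E2aux) :
    ∫⁻ y, G (c • y + b) = ENNReal.ofReal |(c ^ 2)⁻¹| * ∫⁻ z, G z := by
  have hH : Measurable fun z : E2aux => G (z + b) := hG.comp (measurable_add_const b)
  calc ∫⁻ y, G (c • y + b) = ∫⁻ z, G (z + b) ∂(Measure.map (c • ·) volume) := by
        rw [lintegral_map hH (measurable_const_smul c)]
    _ = ENNReal.ofReal |(c ^ Module.finrank ℝ E2aux)⁻¹| * ∫⁻ z, G (z + b) := by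
        rw [Measure.map_addHaar_smul volume hc, lintegral_smul_measure, smul_eq_mul]
    _ = ENNReal.ofReal |(c ^ 2)⁻¹| * ∫⁻ z, G z := by
        rw [lintegral_add_right_eq_self (fun z => G z) b, finrank_euclideanSpace_fin]

lemma aux_FTC {ν : ℕ} (Ψ : E2aux → EuclideanSpace ℝ (Fin ν))
    (Ψ' : E2aux → (E2aux →L[ℝ] EuclideanSpace ℝ (Fin ν)))
    (hdiff : ∀ x, HasFDerivAt Ψ (Ψ' x) x) (hm : Measurable Ψ') (x y : E2aux) :
    (‖Ψ y - Ψ x‖₊ : ℝ≥0∞) ^ 2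
      ≤ (‖y - x‖₊ : ℝ≥0∞) ^ 2 * ∫⁻ t in Icc (0:ℝ) 1, (‖Ψ' (x + t • (y - x))‖₊ : ℝ≥0∞) ^ 2 := by
  set L : ℝ → E2aux := fun t => x + t • (y - x) with hL
  have hLcont : Continuous L := by fun_prop
  set S : ℝ≥0∞ := ∫⁻ t in Icc (0:ℝ) 1, (‖Ψ' (L t)‖₊ : ℝ≥0∞) ^ 2 with hS
  by_cases hxy : y = x
  · simp [hxy]
  by_cases hStop : S = ⊤
  · rw [hStop, ENNReal.mul_top]
    · exact le_top
    · simpa using fun h => hxy (by rwa [sub_eq_zero] at h)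
  set g' : ℝ → EuclideanSpace ℝ (Fin ν) := fun t => Ψ' (L t) (y - x) with hg'
  have hgd : ∀ t : ℝ, HasDerivAt (fun s => Ψ (L s)) (g' t) t := by
    intro t
    have hLd : HasDerivAt L (y - x) t := by
      simpa [hL] using (((hasDerivAt_id t).smul_const (y - x)).const_add x)
    exact (hdiff (L t)).comp_hasDerivAt t hLd
  have hmg' : Measurable g' := by
    have : Measurable fun t => Ψ' (L t) := hm.comp hLcont.measurable
    exact (ContinuousLinearMap.apply ℝ (EuclideanSpace ℝ (Fin ν)) (y - x)).continuous.measurable.comp this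
  have hbound : ∀ t, (‖g' t‖₊ : ℝ≥0∞) ≤ (1 + (‖Ψ' (L t)‖₊ : ℝ≥0∞) ^ 2) * (‖y - x‖₊ : ℝ≥0∞) := by
    intro t
    calc (‖g' t‖₊ : ℝ≥0∞) ≤ (‖Ψ' (L t)‖₊ : ℝ≥0∞) * ‖y - x‖₊ := by
          exact_mod_cast ENNReal.coe_le_coe.2 ((Ψ' (L t)).le_opNNNorm (y - x))
      _ ≤ (1 + (‖Ψ' (L t)‖₊ : ℝ≥0∞) ^ 2) * ‖y - x‖₊ :=
          mul_le_mul_left (ennreal_le_one_add_sq _) _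
  have hfin : ∫⁻ t in Icc (0:ℝ) 1, (‖g' t‖₊ : ℝ≥0∞) < ⊤ := by
    calc ∫⁻ t in Icc (0:ℝ) 1, (‖g' t‖₊ : ℝ≥0∞)
        ≤ ∫⁻ t in Icc (0:ℝ) 1, (1 + (‖Ψ' (L t)‖₊ : ℝ≥0∞) ^ 2) * (‖y - x‖₊ : ℝ≥0∞) :=
          lintegral_mono hbound
      _ = (∫⁻ t in Icc (0:ℝ) 1, (1 + (‖Ψ' (L t)‖₊ : ℝ≥0∞) ^ 2)) * (‖y - x‖₊ : ℝ≥0∞) :=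
          lintegral_mul_const' _ _ (by simp)
      _ = (volume (Icc (0:ℝ) 1) + S) * (‖y - x‖₊ : ℝ≥0∞) := by
          rw [lintegral_add_left measurable_const, lintegral_const, one_mul,
            Measure.restrict_apply_univ]
      _ < ⊤ := by
          apply ENNReal.mul_lt_top
          · exact (ENNReal.add_lt_top.2 ⟨by simp [Real.volume_Icc], lt_top_iff_ne_top.2 hStop⟩)
          · exact ENNReal.coe_lt_top
  have hint : IntegrableOn g' (Icc (0:ℝ) 1) := by
    refine ⟨hmg'.aestronglyMeasurable, ?_⟩
    exact hfin
  have hII : IntervalIntegrable g' volume 0 1 := by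
    rw [intervalIntegrable_iff_integrableOn_Icc_of_le zero_le_one]
    exact hint
  have hFTC : ∫ t in (0:ℝ)..1, g' t = Ψ y - Ψ x := by
    rw [intervalIntegral.integral_eq_sub_of_hasDerivAt (fun t _ => hgd t) hII]
    simp [hL]
  have h1 : (‖Ψ y - Ψ x‖₊ : ℝ≥0∞) ≤ ∫⁻ t in Icc (0:ℝ) 1, (‖g' t‖₊ : ℝ≥0∞) := by
    rw [← hFTC, intervalIntegral.integral_of_le zero_le_one]
    calc (‖∫ t in Ioc (0:ℝ) 1, g' t‖₊ : ℝ≥0∞)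
        ≤ ∫⁻ t in Ioc (0:ℝ) 1, (‖g' t‖₊ : ℝ≥0∞) := enorm_integral_le_lintegral_enorm _
      _ ≤ ∫⁻ t in Icc (0:ℝ) 1, (‖g' t‖₊ : ℝ≥0∞) :=
          lintegral_mono' (Measure.restrict_mono Ioc_subset_Icc_self le_rfl) le_rfl
  have h2 : (∫⁻ t in Icc (0:ℝ) 1, (‖g' t‖₊ : ℝ≥0∞)) ^ 2
      ≤ ∫⁻ t in Icc (0:ℝ) 1, (‖g' t‖₊ : ℝ≥0∞) ^ 2 := by
    have := aux_CS (μ := volume.restrict (Icc (0:ℝ) 1)) (w := fun _ => 1)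
      (g := fun t => (‖g' t‖₊ : ℝ≥0∞)) aemeasurable_const
      (hmg'.nnnorm.coe_nnreal_ennreal.aemeasurable)
    simpa [lintegral_const, Real.volume_Icc] using this
  have h3 : ∫⁻ t in Icc (0:ℝ) 1, (‖g' t‖₊ : ℝ≥0∞) ^ 2 ≤ (‖y - x‖₊ : ℝ≥0∞) ^ 2 * S := by
    rw [hS, ← lintegral_const_mul' _ _ (by simp)]
    apply lintegral_mono
    intro t
    calc (‖g' t‖₊ : ℝ≥0∞) ^ 2 ≤ ((‖Ψ' (L t)‖₊ : ℝ≥0∞) * ‖y - x‖₊) ^ 2 := by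
          apply pow_le_pow_left'
          exact_mod_cast ENNReal.coe_le_coe.2 ((Ψ' (L t)).le_opNNNorm (y - x))
      _ = (‖y - x‖₊ : ℝ≥0∞) ^ 2 * (‖Ψ' (L t)‖₊ : ℝ≥0∞) ^ 2 := by ring
  calc (‖Ψ y - Ψ x‖₊ : ℝ≥0∞) ^ 2 ≤ (∫⁻ t in Icc (0:ℝ) 1, (‖g' t‖₊ : ℝ≥0∞)) ^ 2 :=
        pow_le_pow_left' h1 2
    _ ≤ ∫⁻ t in Icc (0:ℝ) 1, (‖g' t‖₊ : ℝ≥0∞) ^ 2 := h2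
    _ ≤ (‖y - x‖₊ : ℝ≥0∞) ^ 2 * S := h3
set_option maxHeartbeats 1600000 in
theorem stmt_18 {ν : ℕ} (M : Set (EuclideanSpace ℝ (Fin ν)))
    (hM : IsCompact M) (hMne : M.Nonempty)
    (ρ : EuclideanSpace ℝ (Fin 2) → ℝ)
    (hρsm : ContDiff ℝ (⊤ : ℕ∞) ρ) (hρ0 : ∀ x, 0 ≤ ρ x)
    (hρsupp : ∀ x, ρ x ≠ 0 → x ∈ Metric.closedBall (0 : EuclideanSpace ℝ (Fin 2)) 1)
    (hρmass : ∫ x, ρ x = 1)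
    (Ψ : EuclideanSpace ℝ (Fin 2) → EuclideanSpace ℝ (Fin ν))
    (Ψ' : EuclideanSpace ℝ (Fin 2) → (EuclideanSpace ℝ (Fin 2) →L[ℝ] EuclideanSpace ℝ (Fin ν)))
    (hdiff : ∀ x, HasFDerivAt Ψ (Ψ' x) x)
    (hL2 : Integrable (fun x => ‖Ψ' x‖ ^ 2))
    (hval : ∀ᵐ x, Ψ x ∈ M) :
    ∃ C > 0,
      (∀ ℓ : ℕ, 0 < ℓ → ∀ kb : EuclideanSpace ℝ (Fin 2),
        (Metric.infDist (∫ y, (((ℓ : ℝ) ^ 2 * ρ ((ℓ : ℝ) • (kb - y))) • Ψ y)) M) ^ 2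
          ≤ C * ∫ x in Metric.ball kb (1 / ℓ), ‖Ψ' x‖ ^ 2) ∧
      TendstoUniformly
        (fun (ℓ : ℕ) (kb : EuclideanSpace ℝ (Fin 2)) =>
          Metric.infDist (∫ y, (((ℓ : ℝ) ^ 2 * ρ ((ℓ : ℝ) • (kb - y))) • Ψ y)) M)
        (fun _ => 0) atTop := by
  classical
  have hcont : Continuous Ψ := continuous_iff_continuousAt.2 fun x => (hdiff x).continuousAt
  have hvalall : ∀ x, Ψ x ∈ M := by
    intro x
    by_contra hx
    have hU : IsOpen (Ψ ⁻¹' Mᶜ) := hM.isClosed.isOpen_compl.preimage hcont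
    have h0 : volume (Ψ ⁻¹' Mᶜ) = 0 := by
      rw [ae_iff] at hval
      exact measure_mono_null (fun z hz => hz) hval
    exact (hU.measure_pos volume ⟨x, hx⟩).ne' h0
  obtain ⟨K₀, hK₀⟩ := (isCompact_closedBall (0 : E2aux) 1).exists_bound_of_continuousOn
    hρsm.continuous.continuousOn
  set Kρ : ℝ := |K₀| + 1 with hKρdef
  have hKρpos : 0 < Kρ := by positivity
  have hρle : ∀ x, ρ x ≤ Kρ := by
    intro x
    by_cases hx : x ∈ Metric.closedBall (0 : E2aux) 1
    · calc ρ x ≤ ‖ρ x‖ := le_abs_self _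
        _ ≤ K₀ := hK₀ x hx
        _ ≤ Kρ := by rw [hKρdef]; cases abs_cases K₀ with
          | inl h => linarith [h.1]
          | inr h => linarith [h.1]
    · have : ρ x = 0 := by by_contra h; exact hx (hρsupp x h)
      rw [this]; linarith
  have hΨ'eq : Ψ' = fderiv ℝ Ψ := funext fun z => ((hdiff z).fderiv).symm
  have hΨ'meas : Measurable Ψ' := by rw [hΨ'eq]; exact measurable_fderiv _ _
  set F : E2aux → ℝ≥0∞ := fun z => (‖Ψ' z‖₊ : ℝ≥0∞) ^ 2 with hF
  have hFmeas : Measurable F := (hΨ'meas.nnnorm.coe_nnreal_ennreal).pow_const 2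
  have hJfin : (∫⁻ z, F z) ≠ ⊤ := by
    have h := hL2.2
    simp only [HasFiniteIntegral] at h
    refine ne_top_of_lt (lt_of_le_of_lt (le_of_eq ?_) h)
    apply lintegral_congr; intro z
    simp [hF, nnnorm_pow, nnnorm_norm]; rfl
  set V : ℝ≥0∞ := volume (Metric.ball (0 : E2aux) 1) with hV
  have hV0 : V ≠ 0 := (measure_ball_pos volume _ one_pos).ne'
  have hVtop : V ≠ ⊤ := measure_ball_lt_top.ne
  set Cbig : ℝ≥0∞ := 32 * ENNReal.ofReal (Kρ ^ 2) * V with hCbig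
  have hCbig0 : Cbig ≠ 0 := by
    rw [hCbig]
    refine mul_ne_zero (mul_ne_zero (by norm_num) ?_) hV0
    simpa using (ENNReal.ofReal_pos.2 (pow_pos hKρpos 2)).ne'
  have hCbigtop : Cbig ≠ ⊤ := by
    rw [hCbig]
    exact ENNReal.mul_ne_top (ENNReal.mul_ne_top (by norm_num) ENNReal.ofReal_ne_top) hVtop
  have key : ∀ ℓ : ℕ, 0 < ℓ → ∀ kb : E2aux,
      (ENNReal.ofReal (Metric.infDist (∫ y, (((ℓ : ℝ) ^ 2 * ρ ((ℓ : ℝ) • (kb - y))) • Ψ y)) M)) ^ 2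
        ≤ Cbig * ∫⁻ z in Metric.ball kb (1 / (ℓ:ℝ)), F z := by
    intro ℓ hl kb
    have hlr : (0:ℝ) < (ℓ:ℝ) := by exact_mod_cast hl
    set r : ℝ := 1 / (ℓ:ℝ) with hrdef
    have hr : 0 < r := by positivity
    set B : Set E2aux := Metric.closedBall kb r with hBdef
    have hBmeas : MeasurableSet B := measurableSet_closedBall
    set w : E2aux → ℝ := fun y => (ℓ:ℝ)^2 * ρ ((ℓ:ℝ) • (kb - y)) with hwdef
    have hw0 : ∀ y, 0 ≤ w y := fun y => mul_nonneg (by positivity) (hρ0 _)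
    have hρc : Continuous ρ := hρsm.continuous
    have hwcont : Continuous w := by
      apply Continuous.mul continuous_const
      exact hρc.comp (by fun_prop)
    have hwB : ∀ y ∉ B, w y = 0 := by
      intro y hy
      have hz : ρ ((ℓ:ℝ) • (kb - y)) = 0 := by
        by_contra h
        have h1 := hρsupp _ h
        rw [Metric.mem_closedBall, dist_zero_right, norm_smul, Real.norm_eq_abs,
          abs_of_pos hlr] at h1
        have h3 : ‖kb - y‖ = dist y kb := by rw [dist_eq_norm, norm_sub_rev]
        rw [h3] at h1
        have h2 : dist y kb ≤ r := by
          rw [hrdef]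
          exact (le_div_iff₀' hlr).2 h1
        exact hy (Metric.mem_closedBall.2 h2)
      simp [hwdef, hz]
    have hwcs : HasCompactSupport w := HasCompactSupport.intro (isCompact_closedBall kb r) hwB
    have hwint : Integrable w := hwcont.integrable_of_hasCompactSupport hwcs
    have hmass : ∫ y, w y = 1 := by
      have hre : ∀ y : E2aux, w y = (ℓ:ℝ)^2 * ((fun z => ρ (z + (ℓ:ℝ) • kb)) ((-(ℓ:ℝ)) • y)) := by
        intro y
        simp only [hwdef]
        congr 2
        rw [smul_sub, neg_smul]
        abel
      calc ∫ y, w y = ∫ y, (ℓ:ℝ)^2 * ((fun z => ρ (z + (ℓ:ℝ) • kb)) ((-(ℓ:ℝ)) • y)) :=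
            integral_congr_ae (Filter.Eventually.of_forall hre)
        _ = (ℓ:ℝ)^2 * ∫ y, (fun z => ρ (z + (ℓ:ℝ) • kb)) ((-(ℓ:ℝ)) • y) := integral_const_mul _ _
        _ = (ℓ:ℝ)^2 * (|((-(ℓ:ℝ)) ^ Module.finrank ℝ E2aux)⁻¹| • ∫ z, ρ (z + (ℓ:ℝ) • kb)) := by
            rw [MeasureTheory.Measure.integral_comp_smul volume
              (fun z => ρ (z + (ℓ:ℝ) • kb)) (-(ℓ:ℝ))]
        _ = 1 := by
            rw [integral_add_right_eq_self (fun z => ρ z) ((ℓ:ℝ) • kb), hρmass,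
              finrank_euclideanSpace_fin, smul_eq_mul, mul_one,
              show ((-(ℓ:ℝ)) ^ 2) = (ℓ:ℝ)^2 by ring, abs_of_pos (by positivity)]
            field_simp
    set wE : E2aux → ℝ≥0∞ := fun y => ENNReal.ofReal (w y) with hwEdef
    have hwEmeas : Measurable wE := ENNReal.measurable_ofReal.comp hwcont.measurable
    have hmassE : ∫⁻ y, wE y = 1 := by
      rw [hwEdef, ← ofReal_integral_eq_lintegral_ofReal hwint (Filter.Eventually.of_forall hw0),
        hmass, ENNReal.ofReal_one]
    set Wb : ℝ≥0∞ := ENNReal.ofReal ((ℓ:ℝ)^2 * Kρ) with hWbdef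
    have hWbtop : Wb ≠ ⊤ := ENNReal.ofReal_ne_top
    have hwEle : ∀ H : E2aux → ℝ≥0∞, (∫⁻ y, wE y * H y) ≤ Wb * ∫⁻ y in B, H y := by
      intro H
      calc ∫⁻ y, wE y * H y ≤ ∫⁻ y, B.indicator (fun y => Wb * H y) y := by
            apply lintegral_mono
            intro y
            by_cases hy : y ∈ B
            · rw [Set.indicator_of_mem hy]
              apply mul_le_mul_left
              apply ENNReal.ofReal_le_ofReal
              exact mul_le_mul_of_nonneg_left (hρle _) (by positivity)
            · rw [Set.indicator_of_notMem hy]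
              simp [hwEdef, hwB y hy]
        _ = ∫⁻ y in B, Wb * H y := lintegral_indicator hBmeas _
        _ = Wb * ∫⁻ y in B, H y := lintegral_const_mul' _ _ hWbtop
    have hintwΨ : Integrable (fun y => w y • Ψ y) := by
      apply Continuous.integrable_of_hasCompactSupport (hwcont.smul hcont)
      apply HasCompactSupport.intro (isCompact_closedBall kb r)
      intro y hy
      simp [hwB y hy]
    set A : EuclideanSpace ℝ (Fin ν) := ∫ y, w y • Ψ y with hAdef
    set d : ℝ := Metric.infDist A M with hddef
    have stepB : ∀ y : E2aux, (‖A - Ψ y‖₊ : ℝ≥0∞) ≤ ∫⁻ x, wE x * (‖Ψ x - Ψ y‖₊ : ℝ≥0∞) := by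
      intro y
      have h3 : ∫ x, w x • Ψ y = Ψ y := by rw [integral_smul_const, hmass, one_smul]
      have hAy : A - Ψ y = ∫ x, w x • (Ψ x - Ψ y) := by
        rw [hAdef]
        calc (∫ x, w x • Ψ x) - Ψ y = (∫ x, w x • Ψ x) - ∫ x, w x • Ψ y := by rw [h3]
          _ = ∫ x, (w x • Ψ x - w x • Ψ y) := (integral_sub hintwΨ (hwint.smul_const (Ψ y))).symm
          _ = ∫ x, w x • (Ψ x - Ψ y) := by simp [smul_sub]
      rw [hAy]
      calc (‖∫ x, w x • (Ψ x - Ψ y)‖₊ : ℝ≥0∞)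
          ≤ ∫⁻ x, (‖w x • (Ψ x - Ψ y)‖₊ : ℝ≥0∞) := enorm_integral_le_lintegral_enorm _
        _ = ∫⁻ x, wE x * (‖Ψ x - Ψ y‖₊ : ℝ≥0∞) := by
            apply lintegral_congr
            intro x
            rw [nnnorm_smul, ENNReal.coe_mul, ← enorm_eq_nnnorm, Real.enorm_eq_ofReal (hw0 x)]
    have hg_meas : ∀ y : E2aux, AEMeasurable (fun x => (‖Ψ x - Ψ y‖₊ : ℝ≥0∞)) volume := by
      intro y
      exact ((hcont.sub continuous_const).measurable.nnnorm.coe_nnreal_ennreal).aemeasurable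
    have stepAB : (ENNReal.ofReal d) ^ 2
        ≤ ∫⁻ y, wE y * ∫⁻ x, wE x * (‖Ψ x - Ψ y‖₊ : ℝ≥0∞) ^ 2 := by
      have h0 : (ENNReal.ofReal d) ^ 2 = ∫⁻ y, wE y * (ENNReal.ofReal d) ^ 2 := by
        rw [lintegral_mul_const' _ _ (ENNReal.pow_ne_top ENNReal.ofReal_ne_top), hmassE, one_mul]
      rw [h0]
      apply lintegral_mono
      intro y
      apply mul_le_mul_right
      have hdy : ENNReal.ofReal d ≤ (‖A - Ψ y‖₊ : ℝ≥0∞) := by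
        rw [← enorm_eq_nnnorm, ← ofReal_norm_eq_enorm]
        apply ENNReal.ofReal_le_ofReal
        rw [← dist_eq_norm]
        exact Metric.infDist_le_dist_of_mem (hvalall y)
      calc (ENNReal.ofReal d) ^ 2 ≤ (‖A - Ψ y‖₊ : ℝ≥0∞) ^ 2 := pow_le_pow_left' hdy 2
        _ ≤ (∫⁻ x, wE x * (‖Ψ x - Ψ y‖₊ : ℝ≥0∞)) ^ 2 := pow_le_pow_left' (stepB y) 2
        _ ≤ (∫⁻ x, wE x) * ∫⁻ x, wE x * (‖Ψ x - Ψ y‖₊ : ℝ≥0∞) ^ 2 :=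
            aux_CS hwEmeas.aemeasurable (hg_meas y)
        _ = ∫⁻ x, wE x * (‖Ψ x - Ψ y‖₊ : ℝ≥0∞) ^ 2 := by rw [hmassE, one_mul]
    set P : E2aux → E2aux → ℝ≥0∞ := fun y x => ∫⁻ t in Icc (0:ℝ) 1, F (y + t • (x - y)) with hPdef
    have stepC : ∀ y x : E2aux, (‖Ψ x - Ψ y‖₊ : ℝ≥0∞) ^ 2 ≤ (‖x - y‖₊ : ℝ≥0∞) ^ 2 * P y x := by
      intro y x
      simpa [hPdef, hF] using aux_FTC Ψ Ψ' hdiff hΨ'meas y x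
    have stepD : (ENNReal.ofReal d) ^ 2
        ≤ Wb * (Wb * ∫⁻ y in B, ∫⁻ x in B, (‖x - y‖₊ : ℝ≥0∞) ^ 2 * P y x) := by
      calc (ENNReal.ofReal d) ^ 2
          ≤ ∫⁻ y, wE y * ∫⁻ x, wE x * (‖Ψ x - Ψ y‖₊ : ℝ≥0∞) ^ 2 := stepAB
        _ ≤ ∫⁻ y, wE y * ∫⁻ x, wE x * ((‖x - y‖₊ : ℝ≥0∞) ^ 2 * P y x) := by
            apply lintegral_mono; intro y
            apply mul_le_mul_right
            apply lintegral_mono; intro x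
            exact mul_le_mul_right (stepC y x) _
        _ ≤ Wb * ∫⁻ y in B, ∫⁻ x, wE x * ((‖x - y‖₊ : ℝ≥0∞) ^ 2 * P y x) := hwEle _
        _ ≤ Wb * ∫⁻ y in B, (Wb * ∫⁻ x in B, (‖x - y‖₊ : ℝ≥0∞) ^ 2 * P y x) := by
            apply mul_le_mul_right
            apply lintegral_mono
            intro y
            exact hwEle _
        _ = Wb * (Wb * ∫⁻ y in B, ∫⁻ x in B, (‖x - y‖₊ : ℝ≥0∞) ^ 2 * P y x) := by
            rw [lintegral_const_mul' Wb _ hWbtop]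
    set Db : ℝ≥0∞ := ENNReal.ofReal (2 * r) ^ 2 with hDbdef
    have hDbtop : Db ≠ ⊤ := by
      rw [hDbdef]; exact ENNReal.pow_ne_top ENNReal.ofReal_ne_top
    have stepDb : ∫⁻ y in B, ∫⁻ x in B, (‖x - y‖₊ : ℝ≥0∞) ^ 2 * P y x
        ≤ Db * ∫⁻ y in B, ∫⁻ x in B, P y x := by
      rw [← lintegral_const_mul' Db _ hDbtop]
      apply setLIntegral_mono' hBmeas
      intro y hy
      rw [← lintegral_const_mul' Db _ hDbtop]
      apply setLIntegral_mono' hBmeas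
      intro x hx
      apply mul_le_mul_left
      have h1 : (‖x - y‖₊ : ℝ≥0∞) ≤ ENNReal.ofReal (2 * r) := by
        rw [← enorm_eq_nnnorm, ← ofReal_norm_eq_enorm]
        apply ENNReal.ofReal_le_ofReal
        rw [← dist_eq_norm]
        calc dist x y ≤ dist x kb + dist kb y := dist_triangle _ _ _
          _ ≤ r + r := add_le_add hx (by rw [dist_comm]; exact hy)
          _ = 2 * r := by ring
      rw [hDbdef]
      exact pow_le_pow_left' h1 2
    set II : ℝ≥0∞ := ∫⁻ z in B, F z with hIIdef
    have haff : ∀ c : ℝ, c ≠ 0 → ∀ b : E2aux, (∀ z ∈ B, c • z + b ∈ B) →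
        ∫⁻ z in B, F (c • z + b) ≤ ENNReal.ofReal |(c ^ 2)⁻¹| * II := by
      intro c hc b hmaps
      calc ∫⁻ z in B, F (c • z + b) = ∫⁻ z, B.indicator (fun z => F (c • z + b)) z :=
            (lintegral_indicator hBmeas _).symm
        _ ≤ ∫⁻ z, B.indicator F (c • z + b) := by
            apply lintegral_mono
            intro z
            by_cases hz : z ∈ B
            · rw [Set.indicator_of_mem hz]
              exact le_of_eq (Set.indicator_of_mem (hmaps z hz) F).symm
            · rw [Set.indicator_of_notMem hz]; exact zero_le
        _ = ENNReal.ofReal |(c ^ 2)⁻¹| * ∫⁻ z, B.indicator F z :=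
            aux_affine _ (hFmeas.indicator hBmeas) hc b
        _ = ENNReal.ofReal |(c ^ 2)⁻¹| * II := by rw [lintegral_indicator hBmeas]
    have haff4 : ∀ c : ℝ, 1/2 ≤ c → c ≤ 1 → ∀ b : E2aux, (∀ z ∈ B, c • z + b ∈ B) →
        ∫⁻ z in B, F (c • z + b) ≤ 4 * II := by
      intro c hc1 hc2 b hmaps
      refine le_trans (haff c (by linarith) b hmaps) (mul_le_mul_left ?_ _)
      have hc0 : (0:ℝ) < c := by linarith
      have h14 : (1:ℝ)/4 ≤ c^2 := by
        calc (1:ℝ)/4 = (1/2)^2 := by norm_num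
          _ ≤ c^2 := pow_le_pow_left₀ (by norm_num) hc1 2
      have habs : |(c^2)⁻¹| ≤ 4 := by
        rw [abs_of_nonneg (by positivity)]
        have h4 : (c^2)⁻¹ ≤ ((1:ℝ)/4)⁻¹ := inv_anti₀ (by norm_num) h14
        norm_num at h4
        exact h4
      calc ENNReal.ofReal |(c ^ 2)⁻¹| ≤ ENNReal.ofReal 4 := ENNReal.ofReal_le_ofReal habs
        _ = 4 := by norm_num
    have hconv : ∀ t : ℝ, 0 ≤ t → t ≤ 1 → ∀ u ∈ B, ∀ v ∈ B, (1 - t) • u + t • v ∈ B := by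
      intro t ht0 ht1 u hu v hv
      exact (convex_closedBall kb r) hu hv (by linarith) ht0 (by ring)
    have hrw1 : ∀ (y x : E2aux) (t : ℝ), y + t • (x - y) = t • x + (y - t • y) := by
      intro y x t; rw [smul_sub]; abel
    have hrw2 : ∀ (y x : E2aux) (t : ℝ), y + t • (x - y) = (1 - t) • y + t • x := by
      intro y x t; rw [smul_sub, sub_smul, one_smul]; abel
    set P1 : E2aux → E2aux → ℝ≥0∞ :=
      fun y x => ∫⁻ t in Icc (0:ℝ) 2⁻¹, F (y + t • (x - y)) with hP1
    set P2 : E2aux → E2aux → ℝ≥0∞ :=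
      fun y x => ∫⁻ t in Icc (2⁻¹:ℝ) 1, F (y + t • (x - y)) with hP2
    have hmapm : Measurable fun p : (E2aux × E2aux) × ℝ => F (p.1.1 + p.2 • (p.1.2 - p.1.1)) := by
      have hmap : Continuous fun p : (E2aux × E2aux) × ℝ => p.1.1 + p.2 • (p.1.2 - p.1.1) := by
        fun_prop
      exact hFmeas.comp hmap.measurable
    have hP1m : Measurable (Function.uncurry P1) :=
      Measurable.lintegral_prod_right' (f := fun p : (E2aux × E2aux) × ℝ =>
        F (p.1.1 + p.2 • (p.1.2 - p.1.1))) hmapm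
    have hP2m : Measurable (Function.uncurry P2) :=
      Measurable.lintegral_prod_right' (f := fun p : (E2aux × E2aux) × ℝ =>
        F (p.1.1 + p.2 • (p.1.2 - p.1.1))) hmapm
    have hyP1 : Measurable fun y => ∫⁻ x in B, P1 y x :=
      Measurable.lintegral_prod_right' (f := Function.uncurry P1) hP1m
    have hsplit : ∀ y x, P y x ≤ P1 y x + P2 y x := by
      intro y x
      have hsub : Icc (0:ℝ) 1 ⊆ Icc (0:ℝ) 2⁻¹ ∪ Icc (2⁻¹:ℝ) 1 := by
        intro t ht
        rcases le_total t 2⁻¹ with h | h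
        · exact Or.inl ⟨ht.1, h⟩
        · exact Or.inr ⟨h, ht.2⟩
      calc P y x ≤ ∫⁻ t in Icc (0:ℝ) 2⁻¹ ∪ Icc (2⁻¹:ℝ) 1, F (y + t • (x - y)) :=
            lintegral_mono' (Measure.restrict_mono hsub le_rfl) le_rfl
        _ ≤ P1 y x + P2 y x := lintegral_union_le _ _ _
    have hTsplit : ∫⁻ y in B, ∫⁻ x in B, P y x
        ≤ (∫⁻ y in B, ∫⁻ x in B, P1 y x) + ∫⁻ y in B, ∫⁻ x in B, P2 y x := by
      calc ∫⁻ y in B, ∫⁻ x in B, P y x ≤ ∫⁻ y in B, ∫⁻ x in B, (P1 y x + P2 y x) := by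
            apply lintegral_mono; intro y; apply lintegral_mono; intro x; exact hsplit y x
        _ = ∫⁻ y in B, ((∫⁻ x in B, P1 y x) + ∫⁻ x in B, P2 y x) := by
            apply lintegral_congr; intro y
            exact lintegral_add_left (hP1m.comp measurable_prodMk_left) _
        _ = _ := lintegral_add_left hyP1 _
    have hIccle : ∀ a b : ℝ, b - a ≤ 1 → volume (Icc a b) ≤ 1 := by
      intro a b hab
      rw [Real.volume_Icc]
      exact ENNReal.ofReal_le_one.2 hab
    have hT2 : ∫⁻ y in B, ∫⁻ x in B, P2 y x ≤ (4 * II) * volume B := by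
      calc ∫⁻ y in B, ∫⁻ x in B, P2 y x ≤ ∫⁻ (_ : E2aux) in B, (4 * II : ℝ≥0∞) := by
            apply setLIntegral_mono' hBmeas
            intro y hy
            have hswap : ∫⁻ x in B, P2 y x
                = ∫⁻ t in Icc (2⁻¹:ℝ) 1, ∫⁻ x in B, F (y + t • (x - y)) := by
              simp only [hP2]
              apply lintegral_lintegral_swap
              apply Measurable.aemeasurable
              have hmap : Continuous fun p : E2aux × ℝ => y + p.2 • (p.1 - y) := by fun_prop
              exact hFmeas.comp hmap.measurable
            rw [hswap]
            calc ∫⁻ t in Icc (2⁻¹:ℝ) 1, ∫⁻ x in B, F (y + t • (x - y))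
                ≤ ∫⁻ (_ : ℝ) in Icc (2⁻¹:ℝ) 1, (4 * II : ℝ≥0∞) := by
                  apply setLIntegral_mono' measurableSet_Icc
                  intro t ht
                  have heq : ∫⁻ x in B, F (y + t • (x - y))
                      = ∫⁻ x in B, F (t • x + (y - t • y)) := by
                    apply lintegral_congr; intro x; rw [hrw1]
                  rw [heq]
                  apply haff4 t (by simpa using ht.1) ht.2 (y - t • y)
                  intro z hz
                  rw [← hrw1 y z t, hrw2 y z t]
                  have ht0 : (0:ℝ) ≤ t := by
                    have := ht.1; norm_num at this ⊢; linarith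
                  exact hconv t ht0 ht.2 y hy z hz
              _ ≤ 4 * II := by
                  rw [setLIntegral_const]
                  calc (4 * II) * volume (Icc (2⁻¹:ℝ) 1) ≤ (4 * II) * 1 :=
                        mul_le_mul_right (hIccle _ _ (by norm_num)) _
                    _ = 4 * II := mul_one _
        _ = (4 * II) * volume B := setLIntegral_const _ _
    have hT1 : ∫⁻ y in B, ∫⁻ x in B, P1 y x ≤ (4 * II) * volume B := by
      have houter : ∫⁻ y in B, ∫⁻ x in B, P1 y x = ∫⁻ x in B, ∫⁻ y in B, P1 y x :=
        lintegral_lintegral_swap hP1m.aemeasurable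
      rw [houter]
      calc ∫⁻ x in B, ∫⁻ y in B, P1 y x ≤ ∫⁻ (_ : E2aux) in B, (4 * II : ℝ≥0∞) := by
            apply setLIntegral_mono' hBmeas
            intro x hx
            have hswap : ∫⁻ y in B, P1 y x
                = ∫⁻ t in Icc (0:ℝ) 2⁻¹, ∫⁻ y in B, F (y + t • (x - y)) := by
              simp only [hP1]
              apply lintegral_lintegral_swap
              apply Measurable.aemeasurable
              have hmap : Continuous fun p : E2aux × ℝ => p.1 + p.2 • (x - p.1) := by fun_prop
              exact hFmeas.comp hmap.measurable
            rw [hswap]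
            calc ∫⁻ t in Icc (0:ℝ) 2⁻¹, ∫⁻ y in B, F (y + t • (x - y))
                ≤ ∫⁻ (_ : ℝ) in Icc (0:ℝ) 2⁻¹, (4 * II : ℝ≥0∞) := by
                  apply setLIntegral_mono' measurableSet_Icc
                  intro t ht
                  have ht2 : t ≤ 1 := by
                    have := ht.2; norm_num at this ⊢; linarith
                  have heq : ∫⁻ y in B, F (y + t • (x - y))
                      = ∫⁻ y in B, F ((1 - t) • y + t • x) := by
                    apply lintegral_congr; intro y; rw [hrw2]
                  rw [heq]
                  apply haff4 (1 - t) (by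
                    have := ht.2; norm_num at this ⊢; linarith) (by linarith [ht.1]) (t • x)
                  intro z hz
                  exact hconv t ht.1 ht2 z hz x hx
              _ ≤ 4 * II := by
                  rw [setLIntegral_const]
                  calc (4 * II) * volume (Icc (0:ℝ) 2⁻¹) ≤ (4 * II) * 1 :=
                        mul_le_mul_right (hIccle _ _ (by norm_num)) _
                    _ = 4 * II := mul_one _
        _ = (4 * II) * volume B := setLIntegral_const _ _
    have hT : ∫⁻ y in B, ∫⁻ x in B, P y x ≤ 8 * II * volume B := by
      calc ∫⁻ y in B, ∫⁻ x in B, P y x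
          ≤ (∫⁻ y in B, ∫⁻ x in B, P1 y x) + ∫⁻ y in B, ∫⁻ x in B, P2 y x := hTsplit
        _ ≤ (4 * II) * volume B + (4 * II) * volume B := add_le_add hT1 hT2
        _ = 8 * II * volume B := by ring
    have hfinal : (ENNReal.ofReal d) ^ 2 ≤ (8 * (Wb * Wb * Db * volume B)) * II := by
      calc (ENNReal.ofReal d) ^ 2
          ≤ Wb * (Wb * ∫⁻ y in B, ∫⁻ x in B, (‖x - y‖₊ : ℝ≥0∞) ^ 2 * P y x) := stepD
        _ ≤ Wb * (Wb * (Db * ∫⁻ y in B, ∫⁻ x in B, P y x)) :=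
            mul_le_mul_right (mul_le_mul_right stepDb _) _
        _ ≤ Wb * (Wb * (Db * (8 * II * volume B))) :=
            mul_le_mul_right (mul_le_mul_right (mul_le_mul_right hT _) _) _
        _ = (8 * (Wb * Wb * Db * volume B)) * II := by ring
    have hvolB : volume B = ENNReal.ofReal (r ^ 2) * V := by
      rw [hBdef, Measure.addHaar_closedBall volume kb hr.le, finrank_euclideanSpace_fin, hV]
    have e3 : Wb * Wb * (Db * ENNReal.ofReal (r^2))
        = ENNReal.ofReal ((((ℓ:ℝ)^2*Kρ) * ((ℓ:ℝ)^2*Kρ)) * (((2*r) * (2*r)) * r^2)) := by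
      rw [hWbdef, hDbdef, sq (ENNReal.ofReal (2*r)),
        ← ENNReal.ofReal_mul (by positivity : (0:ℝ) ≤ (ℓ:ℝ)^2*Kρ),
        ← ENNReal.ofReal_mul (by positivity : (0:ℝ) ≤ 2*r),
        ← ENNReal.ofReal_mul (by positivity : (0:ℝ) ≤ (2*r)*(2*r)),
        ← ENNReal.ofReal_mul (by positivity : (0:ℝ) ≤ ((ℓ:ℝ)^2*Kρ)*((ℓ:ℝ)^2*Kρ))]
    have hreal : (((ℓ:ℝ)^2*Kρ) * ((ℓ:ℝ)^2*Kρ)) * (((2*r) * (2*r)) * r^2) = 4 * Kρ^2 := by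
      rw [hrdef]
      field_simp
      ring
    have hconst : 8 * (Wb * Wb * Db * volume B) = Cbig := by
      rw [hvolB, show Wb * Wb * Db * (ENNReal.ofReal (r^2) * V)
          = (Wb * Wb * (Db * ENNReal.ofReal (r^2))) * V from by ring,
        e3, hreal, ENNReal.ofReal_mul (by norm_num : (0:ℝ) ≤ 4), hCbig]
      rw [show ENNReal.ofReal 4 = 4 from by norm_num]
      ring
    have hrestr : volume.restrict B = volume.restrict (Metric.ball kb r) := by
      apply Measure.restrict_congr_set
      rw [hBdef, MeasureTheory.ae_eq_set]
      constructor
      · rw [Metric.closedBall_diff_ball]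
        exact Measure.addHaar_sphere volume kb r
      · rw [Set.diff_eq_empty.2 Metric.ball_subset_closedBall]
        exact measure_empty
    calc (ENNReal.ofReal d) ^ 2 ≤ (8 * (Wb * Wb * Db * volume B)) * II := hfinal
      _ = Cbig * II := by rw [hconst]
      _ = Cbig * ∫⁻ z in Metric.ball kb r, F z := by rw [hIIdef, hrestr]
  have hIb : ∀ s : Set E2aux, ∫ x in s, ‖Ψ' x‖ ^ 2 = (∫⁻ x in s, F x).toReal := by
    intro s
    rw [integral_eq_lintegral_of_nonneg_ae (ae_of_all _ fun x => sq_nonneg _)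
      ((hΨ'meas.norm.pow_const 2).aestronglyMeasurable)]
    congr 1
    apply lintegral_congr; intro x
    rw [ENNReal.ofReal_pow (norm_nonneg _), ofReal_norm_eq_enorm, hF, enorm_eq_nnnorm]
  refine ⟨Cbig.toReal + 1, by positivity, ?_, ?_⟩
  · intro ℓ hl kb
    have h1 := key ℓ hl kb
    have hIfin : (∫⁻ z in Metric.ball kb (1 / (ℓ:ℝ)), F z) ≠ ⊤ :=
      ne_top_of_le_ne_top hJfin (setLIntegral_le_lintegral _ _)
    have hne : Cbig * ∫⁻ z in Metric.ball kb (1 / (ℓ:ℝ)), F z ≠ ⊤ :=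
      ENNReal.mul_ne_top hCbigtop hIfin
    have hd0 : (0:ℝ) ≤ Metric.infDist (∫ y, (((ℓ : ℝ) ^ 2 * ρ ((ℓ : ℝ) • (kb - y))) • Ψ y)) M :=
      Metric.infDist_nonneg
    calc (Metric.infDist (∫ y, (((ℓ : ℝ) ^ 2 * ρ ((ℓ : ℝ) • (kb - y))) • Ψ y)) M) ^ 2
        = ((ENNReal.ofReal (Metric.infDist (∫ y, (((ℓ : ℝ) ^ 2 * ρ ((ℓ : ℝ) • (kb - y))) • Ψ y)) M)) ^ 2).toReal := by
          rw [ENNReal.toReal_pow, ENNReal.toReal_ofReal hd0]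
      _ ≤ (Cbig * ∫⁻ z in Metric.ball kb (1 / (ℓ:ℝ)), F z).toReal := ENNReal.toReal_mono hne h1
      _ = Cbig.toReal * (∫⁻ z in Metric.ball kb (1 / (ℓ:ℝ)), F z).toReal := ENNReal.toReal_mul
      _ ≤ (Cbig.toReal + 1) * (∫⁻ z in Metric.ball kb (1 / (ℓ:ℝ)), F z).toReal := by
          apply mul_le_mul_of_nonneg_right (by linarith) ENNReal.toReal_nonneg
      _ = (Cbig.toReal + 1) * ∫ x in Metric.ball kb (1 / (ℓ:ℝ)), ‖Ψ' x‖ ^ 2 := by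
          rw [hIb]
  · rw [Metric.tendstoUniformly_iff]
    intro ε hε
    set X : ℝ≥0∞ := (ENNReal.ofReal ε) ^ 2 with hX
    have hX0 : X ≠ 0 := by
      rw [hX]; simpa using (ENNReal.ofReal_pos.2 hε).ne'
    have hXtop : X ≠ ⊤ := by rw [hX]; simp [ENNReal.ofReal_ne_top]
    set ε₀ : ℝ≥0∞ := (X / 2) * Cbig⁻¹ with hε₀
    have hε₀0 : ε₀ ≠ 0 := by
      rw [hε₀]
      apply mul_ne_zero
      · simp [ENNReal.div_eq_zero_iff, hX0]
      · simp [ENNReal.inv_ne_zero, hCbigtop]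
    obtain ⟨δ, hδ0, hδ⟩ := exists_pos_setLIntegral_lt_of_measure_lt hJfin hε₀0
    have hCe : Cbig * ε₀ = X / 2 := by
      rw [hε₀, ← mul_assoc, mul_comm Cbig (X/2), mul_assoc, ENNReal.mul_inv_cancel hCbig0 hCbigtop,
        mul_one]
    have htend : Tendsto (fun ℓ : ℕ => ENNReal.ofReal ((1 / (ℓ:ℝ)) ^ 2) * V) atTop (𝓝 0) := by
      have h1 : Tendsto (fun ℓ : ℕ => (1 / (ℓ:ℝ)) ^ 2) atTop (𝓝 0) := by
        have : Tendsto (fun n : ℕ => 1 / (n:ℝ)) atTop (𝓝 0) := tendsto_one_div_atTop_nhds_zero_nat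
        simpa using this.pow 2
      have h2 : Tendsto (fun ℓ : ℕ => ENNReal.ofReal ((1 / (ℓ:ℝ)) ^ 2)) atTop (𝓝 0) := by
        simpa [Function.comp_def] using (ENNReal.continuous_ofReal.tendsto 0).comp h1
      simpa using ENNReal.Tendsto.mul_const h2 (Or.inr hVtop)
    have hev : ∀ᶠ ℓ : ℕ in atTop, ENNReal.ofReal ((1 / (ℓ:ℝ)) ^ 2) * V < δ :=
      htend.eventually_lt_const hδ0
    filter_upwards [hev, eventually_ge_atTop 1] with ℓ hℓδ hℓ1 kb
    have hl : 0 < ℓ := hℓ1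
    have hmeasball : volume (Metric.ball kb (1 / (ℓ:ℝ))) < δ := by
      have hr0 : (0:ℝ) ≤ 1 / (ℓ:ℝ) := by positivity
      calc volume (Metric.ball kb (1 / (ℓ:ℝ)))
          ≤ volume (Metric.closedBall kb (1 / (ℓ:ℝ))) := measure_mono ball_subset_closedBall
        _ = ENNReal.ofReal ((1 / (ℓ:ℝ)) ^ 2) * V := by
            rw [Measure.addHaar_closedBall volume kb hr0, finrank_euclideanSpace_fin]
        _ < δ := hℓδ
    have hI := hδ _ hmeasball
    have hlt : (ENNReal.ofReal (Metric.infDist (∫ y, (((ℓ : ℝ) ^ 2 * ρ ((ℓ : ℝ) • (kb - y))) • Ψ y)) M)) ^ 2 < X := by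
      calc (ENNReal.ofReal (Metric.infDist (∫ y, (((ℓ : ℝ) ^ 2 * ρ ((ℓ : ℝ) • (kb - y))) • Ψ y)) M)) ^ 2
          ≤ Cbig * ∫⁻ z in Metric.ball kb (1 / (ℓ:ℝ)), F z := key ℓ hl kb
        _ ≤ Cbig * ε₀ := mul_le_mul_right hI.le _
        _ = X / 2 := hCe
        _ < X := ENNReal.half_lt_self hX0 hXtop
    have hdlt : Metric.infDist (∫ y, (((ℓ : ℝ) ^ 2 * ρ ((ℓ : ℝ) • (kb - y))) • Ψ y)) M < ε := by
      have h2 : ENNReal.ofReal (Metric.infDist (∫ y, (((ℓ : ℝ) ^ 2 * ρ ((ℓ : ℝ) • (kb - y))) • Ψ y)) M)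
          < ENNReal.ofReal ε := by
        by_contra h
        push_neg at h
        exact absurd (pow_le_pow_left' h 2) (not_le.2 hlt)
      rwa [ENNReal.ofReal_lt_ofReal_iff hε] at h2
    rw [Real.dist_eq, abs_sub_comm, sub_zero, abs_of_nonneg Metric.infDist_nonneg]
    exact hdlt
end
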